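/- arXiv:0811.3479 — 5 statements merged into one kernel-verified Lean document; each statement's English description precedes it below -/
import Mathlib

section
/- The number of unordered factorizations of a natural number depends only on the multiset of exponents in its prime factorization: if p, q : Fin k → ℕ are injective functions with p i and q i prime for every i, and a : Fin k → ℕ, then p*(∏_{i} (p i)^{a i}) = p*(∏_{i} (q i)^{a i}). -/
/-!
A permutation `τ` of `ℕ` that maps primes to primes induces a multiplicative automorphism of `ℕ`
replacing each prime `r` in a factorization by `τ r`. Any multiplicative automorphism of `ℕ` fixes
`0` and `1`, so mapping factors through it is a bijection between the factorizations of `m` and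
those of its image. It remains to extend `p i ↦ q i` to such a permutation, which is possible
since both families are injective and finite.
-/

/-- The number of unordered factorizations of `m`: the number of multisets of
natural numbers, all at least `2`, whose product is `m`. -/
noncomputable def numFactorizations (m : ℕ) : ℕ :=
  Nat.card {s : Multiset ℕ // (∀ x ∈ s, 2 ≤ x) ∧ s.prod = m}

lemma two_le_map_iff (φ : ℕ ≃* ℕ) {x : ℕ} : 2 ≤ φ x ↔ 2 ≤ x := by
  have h0 : φ x = 0 ↔ x = 0 := map_eq_zero_iff φ φ.injective
  have h1 : φ x = 1 ↔ x = 1 := φ.map_eq_one_iff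
  omega

theorem numFactorizations_map (φ : ℕ ≃* ℕ) (m : ℕ) :
    numFactorizations (φ m) = numFactorizations m := by
  refine Nat.card_congr (Equiv.subtypeEquiv
    { toFun := Multiset.map φ
      invFun := Multiset.map φ.symm
      left_inv := fun s => by simp [Multiset.map_map]
      right_inv := fun s => by simp [Multiset.map_map] } fun s => ?_).symm
  simp [two_le_map_iff, ← map_multiset_prod]

section RelabelPrimes

variable {τ : Equiv.Perm ℕ}

lemma symm_prime_iff (hτ : ∀ r, (τ r).Prime ↔ r.Prime) (r : ℕ) : (τ.symm r).Prime ↔ r.Prime := by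
  simpa using (hτ (τ.symm r)).symm

/-- `0` is treated separately: its factorization is empty, so the formula would send it to `1`. -/
def relabelPrimes (τ : Equiv.Perm ℕ) (n : ℕ) : ℕ :=
  if n = 0 then 0 else (Finsupp.equivMapDomain τ n.factorization).prod (· ^ ·)

lemma prime_of_mem_support_equivMapDomain (hτ : ∀ r, (τ r).Prime ↔ r.Prime) {n r : ℕ}
    (hr : r ∈ (Finsupp.equivMapDomain τ n.factorization).support) : r.Prime := by
  rw [Finsupp.mem_support_iff, Finsupp.equivMapDomain_apply] at hr
  simpa using (hτ (τ.symm r)).2 (Nat.prime_of_mem_primeFactors (Finsupp.mem_support_iff.2 hr))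

lemma factorization_relabelPrimes (hτ : ∀ r, (τ r).Prime ↔ r.Prime) {n : ℕ} (hn : n ≠ 0) :
    (relabelPrimes τ n).factorization = Finsupp.equivMapDomain τ n.factorization := by
  rw [relabelPrimes, if_neg hn]
  exact Nat.prod_pow_factorization_eq_self fun _ => prime_of_mem_support_equivMapDomain hτ

lemma relabelPrimes_ne_zero (hτ : ∀ r, (τ r).Prime ↔ r.Prime) {n : ℕ} (hn : n ≠ 0) :
    relabelPrimes τ n ≠ 0 := by
  rw [relabelPrimes, if_neg hn]
  exact Finsupp.prod_ne_zero_iff.2 fun _ hr =>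
    pow_ne_zero _ (prime_of_mem_support_equivMapDomain hτ hr).ne_zero

lemma relabelPrimes_mul (hτ : ∀ r, (τ r).Prime ↔ r.Prime) (m n : ℕ) :
    relabelPrimes τ (m * n) = relabelPrimes τ m * relabelPrimes τ n := by
  rcases eq_or_ne m 0 with rfl | hm
  · simp [relabelPrimes]
  rcases eq_or_ne n 0 with rfl | hn
  · simp [relabelPrimes]
  refine Nat.eq_of_factorization_eq (relabelPrimes_ne_zero hτ (mul_ne_zero hm hn))
    (mul_ne_zero (relabelPrimes_ne_zero hτ hm) (relabelPrimes_ne_zero hτ hn)) fun r => ?_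
  rw [Nat.factorization_mul (relabelPrimes_ne_zero hτ hm) (relabelPrimes_ne_zero hτ hn),
    factorization_relabelPrimes hτ (mul_ne_zero hm hn), factorization_relabelPrimes hτ hm,
    factorization_relabelPrimes hτ hn, Nat.factorization_mul hm hn]
  simp [Finsupp.equivMapDomain_apply]

lemma relabelPrimes_symm_relabelPrimes (hτ : ∀ r, (τ r).Prime ↔ r.Prime) (n : ℕ) :
    relabelPrimes τ.symm (relabelPrimes τ n) = n := by
  rcases eq_or_ne n 0 with rfl | hn
  · simp [relabelPrimes]
  have hτ' := symm_prime_iff hτ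
  refine Nat.eq_of_factorization_eq (relabelPrimes_ne_zero hτ' (relabelPrimes_ne_zero hτ hn)) hn
    fun r => ?_
  rw [factorization_relabelPrimes hτ' (relabelPrimes_ne_zero hτ hn),
    factorization_relabelPrimes hτ hn]
  simp [Finsupp.equivMapDomain_apply]

lemma relabelPrimes_prime {r : ℕ} (hr : r.Prime) :
    relabelPrimes τ r = τ r := by
  rw [relabelPrimes, if_neg hr.ne_zero, hr.factorization, Finsupp.equivMapDomain_single]
  simp

def relabelPrimesMulEquiv (τ : Equiv.Perm ℕ) (hτ : ∀ r, (τ r).Prime ↔ r.Prime) : ℕ ≃* ℕ where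
  toFun := relabelPrimes τ
  invFun := relabelPrimes τ.symm
  left_inv := relabelPrimes_symm_relabelPrimes hτ
  right_inv n := by
    simpa using relabelPrimes_symm_relabelPrimes (symm_prime_iff hτ) n
  map_mul' := relabelPrimes_mul hτ

end RelabelPrimes

lemma exists_prime_preserving_perm_extending {k : ℕ} {p q : Fin k → ℕ}
    (hpinj : Function.Injective p) (hqinj : Function.Injective q)
    (hp : ∀ i, (p i).Prime) (hq : ∀ i, (q i).Prime) :
    ∃ τ : Equiv.Perm ℕ, (∀ r, (τ r).Prime ↔ r.Prime) ∧ ∀ i, τ (p i) = q i := by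
  obtain ⟨σ, hσ⟩ := Equiv.Perm.exists_extending_pair (β := {r : ℕ // r.Prime})
    (fun i => ⟨p i, hp i⟩) (fun i => ⟨q i, hq i⟩)
    (fun _ _ h => hpinj (congrArg Subtype.val h)) (fun _ _ h => hqinj (congrArg Subtype.val h))
  refine ⟨σ.subtypeCongr (Equiv.refl _), fun r => ?_, fun i => ?_⟩
  · by_cases hr : r.Prime
    · simpa [Equiv.Perm.subtypeCongr.left_apply _ _ hr, hr] using (σ ⟨r, hr⟩).2
    · simp [Equiv.Perm.subtypeCongr.right_apply _ _ hr, hr]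
  · rw [Equiv.Perm.subtypeCongr.left_apply _ _ (hp i), hσ]

/-- The number of unordered factorizations depends only on the
exponents in the prime factorization: if `p` and `q` are injective families of
primes and `a` is any exponent vector, then
`p*(∏ i, (p i) ^ (a i)) = p*(∏ i, (q i) ^ (a i))`. -/
theorem stmt4 (k : ℕ) (p q : Fin k → ℕ)
    (hpinj : Function.Injective p) (hqinj : Function.Injective q)
    (hp : ∀ i, (p i).Prime) (hq : ∀ i, (q i).Prime) (a : Fin k → ℕ) :
    numFactorizations (∏ i, (p i) ^ (a i)) =
      numFactorizations (∏ i, (q i) ^ (a i)) := by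
  obtain ⟨τ, hτ, hτpq⟩ := exists_prime_preserving_perm_extending hpinj hqinj hp hq
  have hφ : relabelPrimesMulEquiv τ hτ (∏ i, p i ^ a i) = ∏ i, q i ^ a i := by
    simp [map_prod, map_pow, relabelPrimesMulEquiv, relabelPrimes_prime (hp _), hτpq]
  rw [← hφ, numFactorizations_map]
end

section
/- Euler's recurrence for the partition function: for every natural number n, n · p(n) = ∑_{j=1}^{n} σ(j) · p(n − j), where σ(j) denotes the sum of all (positive) divisors of j and p(0) = 1. -/
/-!
Summing the parts of every partition of `n` gives `n · p(n) = ∑_d d · ∑_P c_d(P)`, where `c_d(P)` is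
the number of parts of `P` equal to `d`. Removing `k` copies of `d` identifies the partitions of `n`
with `c_d ≥ k` with the partitions of `n - dk`, so `∑_P c_d(P) = ∑_{k ≥ 1} p(n - dk)`. Grouping the
pairs `(d, k)` by `j = dk` turns `∑_{d,k} d · p(n - dk)` into `∑_j σ(j) · p(n - j)`.
-/

open Finset

theorem Nat.sum_Icc_sum_divisorsAntidiagonal {M : Type*} [AddCommMonoid M] (n : ℕ)
    (f : ℕ → ℕ → M) :
    ∑ j ∈ Icc 1 n, ∑ x ∈ j.divisorsAntidiagonal, f x.1 x.2 =
      ∑ d ∈ Icc 1 n, ∑ k ∈ Icc 1 n, if d * k ≤ n then f d k else 0 := by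
  rw [← sum_product', ← sum_filter,
    ← sum_fiberwise_of_maps_to (g := fun x : ℕ × ℕ => x.1 * x.2) (t := Icc 1 n)]
  · refine sum_congr rfl fun j hj => sum_congr ?_ fun _ _ => rfl
    ext ⟨d, k⟩
    simp only [mem_Icc] at hj
    simp only [mem_divisorsAntidiagonal, mem_filter, mem_product, mem_Icc]
    constructor
    · rintro ⟨rfl, -⟩
      obtain ⟨hd, hk⟩ := CanonicallyOrderedAdd.mul_pos.1 (by omega : 0 < d * k)
      exact ⟨⟨⟨⟨hd, (Nat.le_mul_of_pos_right d hk).trans hj.2⟩,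
        hk, (Nat.le_mul_of_pos_left k hd).trans hj.2⟩, hj.2⟩, rfl⟩
    · rintro ⟨-, rfl⟩
      exact ⟨rfl, by omega⟩
  · intro x hx
    simp only [mem_filter, mem_product, mem_Icc] at hx ⊢
    exact ⟨Nat.mul_pos (by omega) (by omega), hx.2⟩

namespace Nat.Partition

theorem count_mul_le {n : ℕ} (P : n.Partition) (d : ℕ) : P.parts.count d * d ≤ n := by
  obtain ⟨u, hu⟩ := Multiset.le_iff_exists_add.1
    (Multiset.le_count_iff_replicate_le (a := d) (s := P.parts).1 le_rfl)
  have := congrArg Multiset.sum hu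
  rw [Multiset.sum_add, Multiset.sum_replicate, smul_eq_mul, P.parts_sum] at this
  omega

theorem sum_count_mul {n : ℕ} (P : n.Partition) : ∑ d ∈ Icc 1 n, P.parts.count d * d = n := by
  refine (sum_multiset_count_of_subset P.parts (Icc 1 n) fun d hd => ?_).symm.trans P.parts_sum
  rw [Multiset.mem_toFinset] at hd
  exact mem_Icc.2 ⟨P.parts_pos hd, P.le_of_mem_parts hd⟩

def partitionWithPartReplicateEquiv {n d k : ℕ} (hd : 0 < d) (hdk : d * k ≤ n) :
    {P : n.Partition // k ≤ P.parts.count d} ≃ (n - d * k).Partition where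
  toFun P := ⟨P.1.parts - .replicate k d,
    fun hi => P.1.parts_pos (Multiset.mem_of_le (Multiset.sub_le_self _ _) hi), by
      have := congrArg Multiset.sum
        (tsub_add_cancel_of_le (Multiset.le_count_iff_replicate_le.1 P.2))
      rw [Multiset.sum_add, Multiset.sum_replicate, smul_eq_mul, P.1.parts_sum,
        Nat.mul_comm k d] at this
      omega⟩
  invFun Q := ⟨⟨Q.parts + .replicate k d,
    fun hi => (Multiset.mem_add.1 hi).elim Q.parts_pos
      fun h => (Multiset.eq_of_mem_replicate h).symm ▸ hd, by
      rw [Multiset.sum_add, Q.parts_sum, Multiset.sum_replicate, smul_eq_mul, Nat.mul_comm k d]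
      omega⟩, by simp⟩
  left_inv P := Subtype.ext <| Partition.ext <|
    tsub_add_cancel_of_le (Multiset.le_count_iff_replicate_le.1 P.2)
  right_inv Q := Partition.ext <| add_tsub_cancel_right _ _

theorem card_filter_le_count {n d k : ℕ} (hd : 0 < d) :
    #{P : n.Partition | k ≤ P.parts.count d} =
      if d * k ≤ n then Fintype.card (n - d * k).Partition else 0 := by
  split_ifs with hdk
  · rw [← Fintype.card_subtype, Fintype.card_congr (partitionWithPartReplicateEquiv hd hdk)]
  · refine Finset.card_eq_zero.2 (filter_eq_empty_iff.2 fun P _ hk => hdk ?_)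
    calc d * k ≤ d * P.parts.count d := Nat.mul_le_mul_left d hk
      _ = P.parts.count d * d := mul_comm _ _
      _ ≤ n := P.count_mul_le d

theorem sum_count_eq_sum_card {n d : ℕ} (hd : 0 < d) :
    ∑ P : n.Partition, P.parts.count d =
      ∑ k ∈ Icc 1 n, if d * k ≤ n then Fintype.card (n - d * k).Partition else 0 := by
  have hcount (P : n.Partition) : #{k ∈ Icc 1 n | k ≤ P.parts.count d} = P.parts.count d := by
    have hle : P.parts.count d ≤ n :=
      (Nat.le_mul_of_pos_right _ hd).trans (P.count_mul_le d)
    rw [show {k ∈ Icc 1 n | k ≤ P.parts.count d} = Icc 1 (P.parts.count d) by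
      ext k; simp only [mem_filter, mem_Icc]; omega, Nat.card_Icc, Nat.add_sub_cancel]
  rw [← sum_congr rfl fun k _ => card_filter_le_count (n := n) (k := k) hd]
  simp only [card_filter]
  rw [sum_comm]
  exact sum_congr rfl fun P _ => by rw [← card_filter, hcount]

end Nat.Partition

/-- Euler's recurrence for the partition function:
`n · p(n) = ∑_{j=1}^{n} σ(j) · p(n − j)`, where `σ(j)` is the sum of the
positive divisors of `j`. -/
theorem stmt6 (n : ℕ) :
    n * Nat.card (Nat.Partition n) =
      ∑ j ∈ Finset.Icc 1 n,
        (∑ d ∈ Nat.divisors j, d) * Nat.card (Nat.Partition (n - j)) := by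
  simp only [Nat.card_eq_fintype_card]
  calc n * Fintype.card n.Partition
      = ∑ P : n.Partition, ∑ d ∈ Icc 1 n, P.parts.count d * d := by
        rw [sum_congr rfl fun P _ => P.sum_count_mul, sum_const, card_univ, smul_eq_mul, mul_comm]
    _ = ∑ d ∈ Icc 1 n, d * ∑ P : n.Partition, P.parts.count d := by
        rw [sum_comm]
        simp only [mul_sum, mul_comm]
    _ = ∑ d ∈ Icc 1 n, ∑ k ∈ Icc 1 n,
          if d * k ≤ n then d * Fintype.card (n - d * k).Partition else 0 := by
        refine sum_congr rfl fun d hd => ?_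
        rw [Nat.Partition.sum_count_eq_sum_card (mem_Icc.1 hd).1, mul_sum]
        simp only [mul_ite, mul_zero]
    _ = ∑ j ∈ Icc 1 n, ∑ x ∈ j.divisorsAntidiagonal,
          x.1 * Fintype.card (n - x.1 * x.2).Partition :=
        (Nat.sum_Icc_sum_divisorsAntidiagonal n _).symm
    _ = _ := sum_congr rfl fun j _ => by
        rw [sum_mul, Nat.sum_divisorsAntidiagonal fun d k => d * Fintype.card (n - d * k).Partition]
        exact sum_congr rfl fun d hd => by rw [Nat.mul_div_cancel' (Nat.dvd_of_mem_divisors hd)]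
end

section
/- Corrected Harris–Subbarao recurrence (vector form): let k be a positive integer and f : Fin k → ℕ a nonzero tuple. Then in ℚ: p(f) · (∑_{i} f i) = ∑_{g} λ(g) · (∑_{i} g i) · p(f − g), where the sum is over all tuples g : Fin k → ℕ with g ≠ 0 and g j ≤ f j for all j, λ(g) = ∑_{d ∣ c(g)} 1/d, and c(g) is the greatest common divisor of the coordinates of g. -/
/-!
Counting pairs `(t, v)` with `t` a partition of `f` and `v` a part of `t`, weighted by `∑ i, v i`,
gives `p(f) · ∑ i, f i` on one side. On the other, a partition containing a part `h` at least `d`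
times is the same as a partition of `f - d • h` plus `d` copies of `h`, so the same total is
`∑_{h, d} (∑ i, h i) · p(f - d • h)`. Writing `g = d • h`, the pairs `(h, d)` with fixed `g` are
indexed by the divisors `d` of `gcd g`, and `∑ i, h i = (∑ i, g i) / d`; this produces `λ(g)`.
-/

/-- The number of partitions of a vector `f : Fin k → ℕ`: the number of multisets
of nonzero vectors whose sum is `f`. -/
noncomputable def numVectorPartitions (k : ℕ) (f : Fin k → ℕ) : ℕ :=
  Nat.card {t : Multiset (Fin k → ℕ) // (∀ v ∈ t, v ≠ 0) ∧ t.sum = f}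

/-- `λ(g) = ∑_{d ∣ c(g)} 1/d` where `c(g)` is the gcd of the coordinates of `g`. -/
noncomputable def lamVec (k : ℕ) (g : Fin k → ℕ) : ℚ :=
  ∑ d ∈ (Finset.univ.gcd g).divisors, (1 : ℚ) / d

open Finset

section VectorPartitions

variable {ι : Type*} [Fintype ι]

lemma smul_le_of_le_count {t : Multiset (ι → ℕ)} {h : ι → ℕ} {d : ℕ}
    (hd : d ≤ t.count h) : d • h ≤ t.sum := by
  obtain ⟨u, rfl⟩ := Multiset.le_iff_exists_add.mp (Multiset.le_count_iff_replicate_le.mp hd)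
  simp [Multiset.sum_replicate]

lemma le_sum_of_smul_le {h f : ι → ℕ} {d : ℕ} (hh : h ≠ 0) (hd : d • h ≤ f) :
    d ≤ ∑ i, f i := by
  obtain ⟨i, hi⟩ := Function.ne_iff.mp hh
  calc d ≤ d * h i := Nat.le_mul_of_pos_right d (Nat.pos_of_ne_zero hi)
    _ ≤ f i := hd i
    _ ≤ ∑ i, f i := single_le_sum (fun _ _ => Nat.zero_le _) (mem_univ i)

lemma smul_div_of_dvd_gcd {g : ι → ℕ} {e : ℕ} (he : e ∣ univ.gcd g) :
    e • (fun i => g i / e) = g :=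
  funext fun i => Nat.mul_div_cancel' (he.trans (gcd_dvd (mem_univ i)))

variable [DecidableEq ι]

/-- A vector partition of `f` uses each part at most `∑ i, f i` times, so it lies below the
multiset containing every `0 ≤ v ≤ f` that often. -/
lemma finite_setOf_vectorPartition (f : ι → ℕ) :
    {t : Multiset (ι → ℕ) | (∀ v ∈ t, v ≠ 0) ∧ t.sum = f}.Finite := by
  refine (Set.finite_Iic ((∑ i, f i) • (Icc 0 f).val)).subset fun t ⟨hnz, ht⟩ => ?_
  refine Multiset.le_iff_count.mpr fun v => ?_
  by_cases hv : v ∈ t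
  · have hvf : v ∈ Icc 0 f := mem_Icc.mpr ⟨zero_le, ht ▸ Multiset.le_sum_of_mem hv⟩
    rw [Multiset.count_nsmul, Multiset.count_eq_one_of_mem (Icc 0 f).nodup hvf, mul_one]
    exact le_sum_of_smul_le (hnz v hv) (ht ▸ smul_le_of_le_count le_rfl)
  · simp [Multiset.count_eq_zero_of_notMem hv]

noncomputable def vectorPartitions (f : ι → ℕ) : Finset (Multiset (ι → ℕ)) :=
  (finite_setOf_vectorPartition f).toFinset

@[simp]
lemma mem_vectorPartitions {f : ι → ℕ} {t : Multiset (ι → ℕ)} :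
    t ∈ vectorPartitions f ↔ (∀ v ∈ t, v ≠ 0) ∧ t.sum = f := by
  simp [vectorPartitions]

open scoped Classical in
/-- Removing `d` copies of `h` is a bijection from the partitions of `f` with at least `d` parts
equal to `h` onto the partitions of `f - d • h`. -/
lemma card_filter_le_count_vectorPartitions {f h : ι → ℕ} (hh : h ≠ 0) (d : ℕ) :
    #{t ∈ vectorPartitions f | d ≤ t.count h} =
      if d • h ≤ f then #(vectorPartitions (f - d • h)) else 0 := by
  split_ifs with hdf
  · refine card_nbij' (· - Multiset.replicate d h) (· + Multiset.replicate d h) ?_ ?_ ?_ ?_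
    · intro t ht
      simp only [mem_coe, mem_filter, mem_vectorPartitions] at ht ⊢
      obtain ⟨⟨hnz, rfl⟩, hd⟩ := ht
      have hsplit := tsub_add_cancel_of_le (Multiset.le_count_iff_replicate_le.mp hd)
      refine ⟨fun v hv => hnz v (Multiset.mem_of_le tsub_le_self hv), ?_⟩
      refine eq_tsub_of_add_eq ?_
      rw [← Multiset.sum_replicate, ← Multiset.sum_add, hsplit]
    · intro t ht
      simp only [mem_coe, mem_filter, mem_vectorPartitions] at ht ⊢
      refine ⟨⟨fun v hv => ?_, ?_⟩, by simp⟩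
      · rcases Multiset.mem_add.mp hv with hv | hv
        · exact ht.1 v hv
        · exact Multiset.eq_of_mem_replicate hv ▸ hh
      · rw [Multiset.sum_add, ht.2, Multiset.sum_replicate, tsub_add_cancel_of_le hdf]
    · intro t ht
      simp only [mem_coe, mem_filter] at ht
      exact tsub_add_cancel_of_le (Multiset.le_count_iff_replicate_le.mp ht.2)
    · intro t _
      exact add_tsub_cancel_right _ _
  · refine card_eq_zero.mpr (filter_eq_empty_iff.mpr fun t ht hd => hdf ?_)
    exact (mem_vectorPartitions.mp ht).2 ▸ smul_le_of_le_count hd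

open scoped Classical in
lemma sum_count_vectorPartitions {f h : ι → ℕ} (hh : h ≠ 0) :
    ∑ t ∈ vectorPartitions f, t.count h =
      ∑ d ∈ {d ∈ Icc 1 (∑ i, f i) | d • h ≤ f}, #(vectorPartitions (f - d • h)) := by
  have hcount : ∀ t ∈ vectorPartitions f,
      t.count h = ∑ d ∈ Icc 1 (∑ i, f i), if d ≤ t.count h then 1 else 0 := by
    intro t ht
    have hle : t.count h ≤ ∑ i, f i :=
      le_sum_of_smul_le hh ((mem_vectorPartitions.mp ht).2 ▸ smul_le_of_le_count le_rfl)
    have hfilter : {d ∈ Icc 1 (∑ i, f i) | d ≤ t.count h} = Icc 1 (t.count h) := by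
      ext d
      simp only [mem_filter, mem_Icc]
      omega
    rw [sum_boole, Nat.cast_id, hfilter, Nat.card_Icc, Nat.add_sub_cancel]
  rw [sum_congr rfl hcount, sum_comm, sum_filter]
  refine sum_congr rfl fun d _ => ?_
  rw [sum_boole, Nat.cast_id, card_filter_le_count_vectorPartitions hh]

lemma sum_eq_sum_count_mul {f : ι → ℕ} {t : Multiset (ι → ℕ)} (ht : t ∈ vectorPartitions f) :
    ∑ i, f i = ∑ h ∈ {h ∈ Icc 0 f | h ≠ 0}, t.count h * ∑ i, h i := by
  obtain ⟨hnz, rfl⟩ := mem_vectorPartitions.mp ht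
  have hsupp : t.toFinset ⊆ {h ∈ Icc 0 t.sum | h ≠ 0} := fun v hv => by
    rw [Multiset.mem_toFinset] at hv
    exact mem_filter.mpr ⟨mem_Icc.mpr ⟨zero_le, Multiset.le_sum_of_mem hv⟩, hnz v hv⟩
  calc ∑ i, t.sum i = (t.map fun v => ∑ i, v i).sum := by
        simp only [Pi.multiset_sum_apply, Multiset.sum_map_sum]
    _ = ∑ h ∈ t.toFinset, t.count h * ∑ i, h i := sum_multiset_map_count _ _
    _ = _ := sum_subset hsupp fun h _ hh => by
        rw [Multiset.count_eq_zero_of_notMem (Multiset.mem_toFinset.not.mp hh), zero_mul]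

open scoped Classical in
lemma card_vectorPartitions_mul_sum (f : ι → ℕ) :
    #(vectorPartitions f) * ∑ i, f i =
      ∑ h ∈ {h ∈ Icc 0 f | h ≠ 0}, (∑ i, h i) *
        ∑ d ∈ {d ∈ Icc 1 (∑ i, f i) | d • h ≤ f}, #(vectorPartitions (f - d • h)) := by
  calc #(vectorPartitions f) * ∑ i, f i
      = ∑ t ∈ vectorPartitions f, ∑ h ∈ {h ∈ Icc 0 f | h ≠ 0}, t.count h * ∑ i, h i := by
        rw [← smul_eq_mul, ← sum_const]
        exact sum_congr rfl fun t ht => sum_eq_sum_count_mul ht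
    _ = ∑ h ∈ {h ∈ Icc 0 f | h ≠ 0}, (∑ i, h i) * ∑ t ∈ vectorPartitions f, t.count h := by
        rw [sum_comm]
        exact sum_congr rfl fun h _ => by rw [← sum_mul, mul_comm]
    _ = _ := sum_congr rfl fun h hh => by
        rw [sum_count_vectorPartitions (mem_filter.mp hh).2]

open scoped Classical in
lemma sum_divisors_gcd_eq_sum_smul {M : Type*} [AddCommMonoid M] (f : ι → ℕ)
    (F : (ι → ℕ) → ℕ → M) :
    ∑ g ∈ {g ∈ Icc 0 f | g ≠ 0}, ∑ e ∈ (univ.gcd g).divisors, F g e =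
      ∑ h ∈ {h ∈ Icc 0 f | h ≠ 0}, ∑ d ∈ {d ∈ Icc 1 (∑ i, f i) | d • h ≤ f}, F (d • h) d := by
  rw [sum_sigma', sum_sigma']
  refine sum_nbij' (fun p => ⟨fun i => p.1 i / p.2, p.2⟩) (fun q => ⟨q.2 • q.1, q.2⟩)
    ?_ ?_ ?_ ?_ ?_
  · rintro ⟨g, e⟩ hge
    simp only [mem_sigma, mem_filter, mem_Icc] at hge ⊢
    obtain ⟨⟨⟨-, hgf⟩, hg⟩, he⟩ := hge
    have hsmul := smul_div_of_dvd_gcd (Nat.dvd_of_mem_divisors he)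
    have hdiv : (fun i => g i / e) ≠ 0 := by
      rintro h0
      rw [h0, smul_zero] at hsmul
      exact hg hsmul.symm
    refine ⟨⟨⟨fun i => zero_le, fun i => (Nat.div_le_self _ _).trans (hgf i)⟩, hdiv⟩,
      ⟨Nat.pos_of_mem_divisors he, le_sum_of_smul_le hdiv (by rwa [hsmul])⟩, by rwa [hsmul]⟩
  · rintro ⟨h, d⟩ hhd
    simp only [mem_sigma, mem_filter, mem_Icc, Nat.mem_divisors] at hhd ⊢
    obtain ⟨⟨-, hh⟩, ⟨hd, -⟩, hdf⟩ := hhd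
    have hdh : d • h ≠ 0 := smul_ne_zero (Nat.one_le_iff_ne_zero.mp hd) hh
    refine ⟨⟨⟨zero_le, hdf⟩, hdh⟩, dvd_gcd fun i _ => dvd_mul_right d (h i), ?_⟩
    exact fun h0 => hdh (funext fun i => Finset.gcd_eq_zero_iff.mp h0 i (mem_univ i))
  · rintro ⟨g, e⟩ hge
    simp [smul_div_of_dvd_gcd (Nat.dvd_of_mem_divisors (mem_sigma.mp hge).2)]
  · rintro ⟨h, d⟩ hhd
    have hd : 0 < d := (mem_Icc.mp (mem_filter.mp (mem_sigma.mp hhd).2).1).1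
    simp [Nat.mul_div_cancel_left _ hd]
  · rintro ⟨g, e⟩ hge
    simp [smul_div_of_dvd_gcd (Nat.dvd_of_mem_divisors (mem_sigma.mp hge).2)]

end VectorPartitions

lemma numVectorPartitions_eq_card (k : ℕ) (f : Fin k → ℕ) :
    numVectorPartitions k f = #(vectorPartitions f) :=
  (Nat.card_coe_set_eq _).trans (Set.ncard_eq_toFinset_card _ _)

theorem stmt8_general (k : ℕ) (f : Fin k → ℕ) :
    (numVectorPartitions k f : ℚ) * (∑ i, (f i : ℚ)) =
      ∑ g ∈ (Finset.Icc 0 f).filter (· ≠ 0),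
        lamVec k g * (∑ i, (g i : ℚ)) * numVectorPartitions k (f - g) := by
  classical
  simp only [numVectorPartitions_eq_card]
  calc (#(vectorPartitions f) : ℚ) * ∑ i, (f i : ℚ)
      = ((#(vectorPartitions f) * ∑ i, f i : ℕ) : ℚ) := by push_cast; rfl
    _ = ∑ h ∈ {h ∈ Icc 0 f | h ≠ 0}, ∑ d ∈ {d ∈ Icc 1 (∑ i, f i) | d • h ≤ f},
          (1 / d : ℚ) * (∑ i, ((d • h) i : ℚ)) * #(vectorPartitions (f - d • h)) := by
        rw [card_vectorPartitions_mul_sum]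
        push_cast
        refine sum_congr rfl fun h _ => ?_
        rw [mul_sum]
        refine sum_congr rfl fun d hd => ?_
        have hd0 : (d : ℚ) ≠ 0 := by
          have := (mem_Icc.mp (mem_filter.mp hd).1).1; positivity
        simp only [Pi.smul_apply, smul_eq_mul, Nat.cast_mul, ← mul_sum]
        field_simp
    _ = ∑ g ∈ {g ∈ Icc 0 f | g ≠ 0}, ∑ e ∈ (univ.gcd g).divisors,
          (1 / e : ℚ) * (∑ i, (g i : ℚ)) * #(vectorPartitions (f - g)) :=
        (sum_divisors_gcd_eq_sum_smul f
          fun g e => (1 / e : ℚ) * (∑ i, (g i : ℚ)) * #(vectorPartitions (f - g))).symm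
    _ = _ := by simp only [lamVec, sum_mul]

/-- Corrected Harris–Subbarao recurrence (vector form): for a
nonzero `f : Fin k → ℕ`,
`p(f) · (∑ i, f i) = ∑_{0 ≠ g ≤ f} λ(g) · (∑ i, g i) · p(f − g)` in `ℚ`. -/
theorem stmt8 (k : ℕ) (hk : 0 < k) (f : Fin k → ℕ) (hf : f ≠ 0) :
    (numVectorPartitions k f : ℚ) * (∑ i, (f i : ℚ)) =
      ∑ g ∈ (Finset.Icc 0 f).filter (· ≠ 0),
        lamVec k g * (∑ i, (g i : ℚ)) * numVectorPartitions k (f - g) :=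
  stmt8_general k f
end

section
/- Corrected Harris–Subbarao recurrence (arithmetic form): for every natural number n ≥ 2, the following identity holds in ℚ: p*(n) · Ω(n) = ∑_{d ∣ n, d ≠ 1} λ(d) · Ω(d) · p*(n / d), where Ω(m) is the number of prime factors of m counted with multiplicity, c(d) is the greatest common divisor of the exponents appearing in the prime factorization of d, and λ(d) = ∑_{i ∣ c(d)} 1/i. -/
/-- `c(d)`: the gcd of the exponents in the prime factorization of `d`. -/
def expGcd (d : ℕ) : ℕ :=
  d.primeFactors.gcd fun p => d.factorization p

/-- `λ(d) = ∑_{i ∣ c(d)} 1/i`. -/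
noncomputable def lam (d : ℕ) : ℚ :=
  ∑ i ∈ (expGcd d).divisors, (1 : ℚ) / i

/-!
For a factorization `s` of `n`, `Ω(n) = ∑_{b ∈ s} mult_s(b) Ω(b)`, so `p*(n) Ω(n)` is the sum of
`Ω(b)` over the triples `(s, b, k)` with `1 ≤ k ≤ mult_s(b)`. Removing `k` copies of `b` from `s`
maps these bijectively to the triples `(d, k, t)` with `1 ≠ d ∣ n`, `k ∣ c(d)` and `t` a
factorization of `n / d`: here `d = b ^ k`, and `b` is recovered as the exact `k`-th root of `d`.
Since `Ω(b) = Ω(d) / k`, the sum over `k ∣ c(d)` produces the weight `λ(d) Ω(d)`.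
-/

open ArithmeticFunction

open scoped ArithmeticFunction.Omega

theorem prod_ne_zero_of_two_le {s : Multiset ℕ} (hs : ∀ x ∈ s, 2 ≤ x) : s.prod ≠ 0 :=
  Multiset.prod_ne_zero fun h => by simpa using hs 0 h

theorem card_le_cardFactors_prod {s : Multiset ℕ} (hs : ∀ x ∈ s, 2 ≤ x) :
    Multiset.card s ≤ Ω s.prod := by
  rw [cardFactors_multiset_prod (prod_ne_zero_of_two_le hs)]
  simpa using Multiset.card_nsmul_le_sum (s := s.map Ω) (a := 1) fun x hx => by
    obtain ⟨y, hy, rfl⟩ := Multiset.mem_map.1 hx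
    exact cardFactors_pos_iff_one_lt.2 (hs y hy)

theorem finite_setOf_factorization (m : ℕ) :
    {s : Multiset ℕ | (∀ x ∈ s, 2 ≤ x) ∧ s.prod = m}.Finite := by
  refine (Ω m • m.divisors.val).powerset.toFinset.finite_toSet.subset ?_
  rintro s ⟨hs, rfl⟩
  simp only [Finset.mem_coe, Multiset.mem_toFinset, Multiset.mem_powerset, Multiset.le_iff_count]
  intro a
  by_cases ha : a ∈ s
  · rw [Multiset.count_nsmul, Multiset.count_eq_one_of_mem s.prod.divisors.nodup
      (Nat.mem_divisors.2 ⟨Multiset.dvd_prod ha, prod_ne_zero_of_two_le hs⟩), mul_one]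
    exact (Multiset.count_le_card a s).trans (card_le_cardFactors_prod hs)
  · simp [Multiset.count_eq_zero_of_notMem ha]

noncomputable def factorizations (m : ℕ) : Finset (Multiset ℕ) :=
  (finite_setOf_factorization m).toFinset

theorem mem_factorizations {m : ℕ} {s : Multiset ℕ} :
    s ∈ factorizations m ↔ (∀ x ∈ s, 2 ≤ x) ∧ s.prod = m :=
  Set.Finite.mem_toFinset _

theorem numFactorizations_eq_card (m : ℕ) : numFactorizations m = (factorizations m).card :=
  Nat.card_eq_card_finite_toFinset _

theorem ne_zero_of_mem_factorizations {m : ℕ} {s : Multiset ℕ} (hs : s ∈ factorizations m) :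
    m ≠ 0 := by
  obtain ⟨hs2, rfl⟩ := mem_factorizations.1 hs
  exact prod_ne_zero_of_two_le hs2

theorem expGcd_ne_zero {d : ℕ} (hd0 : d ≠ 0) (hd1 : d ≠ 1) : expGcd d ≠ 0 := by
  obtain ⟨p, hp, hpd⟩ := Nat.exists_prime_and_dvd hd1
  intro h
  exact (hp.factorization_pos_of_dvd hd0 hpd).ne'
    (Finset.gcd_eq_zero_iff.1 h p (Nat.mem_primeFactors.2 ⟨hp, hpd, hd0⟩))

theorem dvd_expGcd_pow (b k : ℕ) : k ∣ expGcd (b ^ k) :=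
  Finset.dvd_gcd fun p _ => by simp [Nat.factorization_pow]

def exactRoot (d k : ℕ) : ℕ :=
  d.factorization.prod fun p e => p ^ (e / k)

theorem exactRoot_pow {d k : ℕ} (hd : d ≠ 0) (hk : k ∣ expGcd d) : exactRoot d k ^ k = d := by
  rw [exactRoot, Finsupp.prod, ← Finset.prod_pow]
  conv_rhs => rw [← Nat.prod_factorization_pow_eq_self hd]
  refine Finset.prod_congr rfl fun p hp => ?_
  rw [← pow_mul, Nat.div_mul_cancel (hk.trans (Finset.gcd_dvd (by simpa using hp)))]

theorem exactRoot_pow_self {b k : ℕ} (hb : b ≠ 0) (hk : k ≠ 0) : exactRoot (b ^ k) k = b :=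
  Nat.pow_left_injective hk (exactRoot_pow (pow_ne_zero k hb) (dvd_expGcd_pow b k))

section Splitting

variable {n b k : ℕ} {s t : Multiset ℕ}

theorem prod_sub_replicate_mul (h : Multiset.replicate k b ≤ s) :
    (s - Multiset.replicate k b).prod * b ^ k = s.prod := by
  rw [← Multiset.prod_replicate, ← Multiset.prod_add, tsub_add_cancel_of_le h]

theorem two_le_of_replicate_le (hs : s ∈ factorizations n) (hk : k ≠ 0)
    (h : Multiset.replicate k b ≤ s) : 2 ≤ b :=
  (mem_factorizations.1 hs).1 b (Multiset.mem_of_le h (Multiset.mem_replicate.2 ⟨hk, rfl⟩))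

theorem pow_dvd_of_replicate_le (hs : s ∈ factorizations n) (h : Multiset.replicate k b ≤ s) :
    b ^ k ∣ n :=
  (mem_factorizations.1 hs).2 ▸ Dvd.intro_left _ (prod_sub_replicate_mul h)

theorem sub_replicate_mem_factorizations (hs : s ∈ factorizations n)
    (h : Multiset.replicate k b ≤ s) :
    s - Multiset.replicate k b ∈ factorizations (n / b ^ k) := by
  have hbk : b ^ k ≠ 0 := ne_zero_of_dvd_ne_zero (ne_zero_of_mem_factorizations hs)
    (pow_dvd_of_replicate_le hs h)
  obtain ⟨hs2, rfl⟩ := mem_factorizations.1 hs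
  refine mem_factorizations.2
    ⟨fun x hx => hs2 x (Multiset.mem_of_le (Multiset.sub_le_self _ _) hx), ?_⟩
  rw [← prod_sub_replicate_mul h, Nat.mul_div_cancel _ (Nat.pos_of_ne_zero hbk)]

theorem add_replicate_mem_factorizations (ht : t ∈ factorizations (n / b ^ k)) (hb : 2 ≤ b)
    (h : b ^ k ∣ n) : t + Multiset.replicate k b ∈ factorizations n := by
  obtain ⟨ht2, htn⟩ := mem_factorizations.1 ht
  refine mem_factorizations.2 ⟨fun x hx => ?_, ?_⟩
  · rcases Multiset.mem_add.1 hx with hx | hx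
    · exact ht2 x hx
    · exact (Multiset.eq_of_mem_replicate hx).symm ▸ hb
  · rw [Multiset.prod_add, Multiset.prod_replicate, htn, Nat.div_mul_cancel h]

end Splitting

noncomputable def markedFactorizations (n : ℕ) : Finset (Σ _ : Multiset ℕ, Σ _ : ℕ, ℕ) :=
  (factorizations n).sigma fun s => s.toFinset.sigma fun b => Finset.Icc 1 (s.count b)

theorem mk_mem_markedFactorizations {n b k : ℕ} {s : Multiset ℕ} :
    ⟨s, b, k⟩ ∈ markedFactorizations n ↔
      s ∈ factorizations n ∧ k ≠ 0 ∧ Multiset.replicate k b ≤ s := by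
  rw [← Multiset.le_count_iff_replicate_le]
  simp only [markedFactorizations, Finset.mem_sigma, Multiset.mem_toFinset, Finset.mem_Icc]
  constructor
  · rintro ⟨hs, -, hk1, hk⟩
    exact ⟨hs, by omega, hk⟩
  · rintro ⟨hs, hk0, hk⟩
    exact ⟨hs, Multiset.count_pos.1 (by omega), by omega, hk⟩

noncomputable def powerSplittings (n : ℕ) : Finset (Σ _ : ℕ, ℕ × Multiset ℕ) :=
  (n.divisors.erase 1).sigma fun d => (expGcd d).divisors ×ˢ factorizations (n / d)

theorem mk_mem_powerSplittings {n d k : ℕ} {t : Multiset ℕ} :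
    ⟨d, k, t⟩ ∈ powerSplittings n ↔
      d ∣ n ∧ n ≠ 0 ∧ d ≠ 1 ∧ k ∣ expGcd d ∧ k ≠ 0 ∧ t ∈ factorizations (n / d) := by
  simp only [powerSplittings, Finset.mem_sigma, Finset.mem_erase, Nat.mem_divisors,
    Finset.mem_product]
  constructor
  · rintro ⟨⟨hd1, hdn, hn⟩, ⟨hk, hc⟩, ht⟩
    exact ⟨hdn, hn, hd1, hk, fun hk0 => hc (zero_dvd_iff.1 (hk0 ▸ hk)), ht⟩
  · rintro ⟨hdn, hn, hd1, hk, -, ht⟩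
    exact ⟨⟨hd1, hdn, hn⟩, ⟨hk, expGcd_ne_zero (ne_zero_of_dvd_ne_zero hn hdn) hd1⟩, ht⟩

theorem card_factorizations_mul_cardFactors (n : ℕ) :
    ((factorizations n).card : ℚ) * Ω n = ∑ x ∈ markedFactorizations n, (Ω x.2.1 : ℚ) := by
  rw [markedFactorizations, Finset.sum_sigma, ← nsmul_eq_mul, ← Finset.sum_const]
  refine Finset.sum_congr rfl fun s hs => ?_
  have hn := ne_zero_of_mem_factorizations hs
  obtain ⟨-, rfl⟩ := mem_factorizations.1 hs
  rw [cardFactors_multiset_prod hn, Finset.sum_multiset_map_count, Finset.sum_sigma]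
  push_cast
  simp [Finset.sum_const, Nat.card_Icc]

theorem sum_lam_mul_cardFactors (n : ℕ) :
    ∑ d ∈ n.divisors.erase 1, lam d * Ω d * (factorizations (n / d)).card =
      ∑ y ∈ powerSplittings n, (Ω y.1 : ℚ) / y.2.1 := by
  rw [powerSplittings, Finset.sum_sigma]
  refine Finset.sum_congr rfl fun d _ => ?_
  rw [Finset.sum_product, lam, Finset.sum_mul, Finset.sum_mul]
  refine Finset.sum_congr rfl fun k _ => ?_
  dsimp only
  rw [Finset.sum_const, nsmul_eq_mul]
  ring

theorem sum_markedFactorizations_eq_sum_powerSplittings (n : ℕ) :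
    ∑ x ∈ markedFactorizations n, (Ω x.2.1 : ℚ) =
      ∑ y ∈ powerSplittings n, (Ω y.1 : ℚ) / y.2.1 := by
  refine Finset.sum_nbij'
    (fun x => ⟨x.2.1 ^ x.2.2, x.2.2, x.1 - Multiset.replicate x.2.2 x.2.1⟩)
    (fun y => ⟨y.2.2 + Multiset.replicate y.2.1 (exactRoot y.1 y.2.1), exactRoot y.1 y.2.1, y.2.1⟩)
    ?_ ?_ ?_ ?_ ?_
  · rintro ⟨s, b, k⟩ hx
    obtain ⟨hs, hk, h⟩ := mk_mem_markedFactorizations.1 hx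
    have hb := two_le_of_replicate_le hs hk h
    exact mk_mem_powerSplittings.2 ⟨pow_dvd_of_replicate_le hs h,
      ne_zero_of_mem_factorizations hs, (Nat.one_lt_pow hk hb).ne', dvd_expGcd_pow b k, hk,
      sub_replicate_mem_factorizations hs h⟩
  · rintro ⟨d, k, t⟩ hy
    obtain ⟨hdn, hn, hd1, hk, hk0, ht⟩ := mk_mem_powerSplittings.1 hy
    have hd0 : d ≠ 0 := ne_zero_of_dvd_ne_zero hn hdn
    have hroot := exactRoot_pow hd0 hk
    have hb : 2 ≤ exactRoot d k := (Nat.two_le_iff _).2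
      ⟨fun h => hd0 (by rw [← hroot, h, zero_pow hk0]),
        fun h => hd1 (by rw [← hroot, h, one_pow])⟩
    rw [← hroot] at ht hdn
    exact mk_mem_markedFactorizations.2 ⟨add_replicate_mem_factorizations ht hb hdn, hk0,
      Multiset.le_add_left _ _⟩
  · rintro ⟨s, b, k⟩ hx
    obtain ⟨hs, hk, h⟩ := mk_mem_markedFactorizations.1 hx
    have hb := two_le_of_replicate_le hs hk h
    simp only [exactRoot_pow_self (by omega : b ≠ 0) hk, tsub_add_cancel_of_le h]
  · rintro ⟨d, k, t⟩ hy
    obtain ⟨hdn, hn, -, hk, -, -⟩ := mk_mem_powerSplittings.1 hy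
    simp only [exactRoot_pow (ne_zero_of_dvd_ne_zero hn hdn) hk, add_tsub_cancel_right]
  · rintro ⟨s, b, k⟩ hx
    obtain ⟨-, hk, -⟩ := mk_mem_markedFactorizations.1 hx
    simp only [cardFactors_pow]
    push_cast
    field_simp

theorem stmt9_general (n : ℕ) :
    (numFactorizations n : ℚ) * (n.primeFactorsList.length : ℚ) =
      ∑ d ∈ n.divisors.erase 1,
        lam d * (d.primeFactorsList.length : ℚ) * numFactorizations (n / d) := by
  simp only [← cardFactors_apply, numFactorizations_eq_card]
  rw [card_factorizations_mul_cardFactors, sum_markedFactorizations_eq_sum_powerSplittings,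
    sum_lam_mul_cardFactors]

/-- Corrected Harris–Subbarao recurrence (arithmetic form): for
`n ≥ 2`, `p*(n) · Ω(n) = ∑_{d ∣ n, d ≠ 1} λ(d) · Ω(d) · p*(n / d)` in `ℚ`,
where `Ω` counts prime factors with multiplicity. -/
theorem stmt9 (n : ℕ) (hn : 2 ≤ n) :
    (numFactorizations n : ℚ) * (n.primeFactorsList.length : ℚ) =
      ∑ d ∈ n.divisors.erase 1,
        lam d * (d.primeFactorsList.length : ℚ) * numFactorizations (n / d) :=
  stmt9_general n
end

section
/- Let n be a positive natural number and p a prime number with p ∤ n. Then the number of unordered factorizations of n·p satisfies p*(n·p) = ∑_{d ∣ n} p*(d), the sum being over all positive divisors d of n. -/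
abbrev UnorderedFactorization (m : ℕ) : Type :=
  {s : Multiset ℕ // (∀ x ∈ s, 2 ≤ x) ∧ s.prod = m}

namespace UnorderedFactorization

theorem card_lt {m : ℕ} (s : UnorderedFactorization m) : Multiset.card s.1 < m :=
  calc Multiset.card s.1 < 2 ^ Multiset.card s.1 := Nat.lt_two_pow_self
    _ ≤ s.1.prod := Multiset.pow_card_le_prod s.2.1
    _ = m := s.2.2

theorem le_nsmul_range {m : ℕ} (s : UnorderedFactorization m) :
    s.1 ≤ m • Multiset.range (m + 1) := by
  rw [Multiset.le_iff_count]
  intro x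
  by_cases hx : x ∈ s.1
  · have hxm : x ≤ m := Nat.le_of_dvd (Nat.zero_lt_of_lt s.card_lt)
      (s.2.2 ▸ Multiset.dvd_prod hx)
    rw [Multiset.count_nsmul, Multiset.count_eq_one_of_mem (Multiset.nodup_range _)
      (Multiset.mem_range.mpr (Nat.lt_succ_of_le hxm)), mul_one]
    exact (Multiset.count_le_card x s.1).trans s.card_lt.le
  · simp [Multiset.count_eq_zero_of_notMem hx]

instance (m : ℕ) : Finite (UnorderedFactorization m) :=
  Finite.of_injective (β := (m • Multiset.range (m + 1)).powerset.toFinset)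
    (fun s => ⟨s.1, Multiset.mem_toFinset.mpr (Multiset.mem_powerset.mpr s.le_nsmul_range)⟩)
    fun _ _ h => Subtype.ext (Subtype.mk.inj h)

variable {n p : ℕ}

theorem two_le_prime_mul_div (hp : p.Prime) {d : ℕ} (hd : d ∈ n.divisors) :
    2 ≤ p * (n / d) :=
  hp.two_le.trans (Nat.le_mul_of_pos_right p (Nat.div_pos (Nat.divisor_le hd)
    (Nat.pos_of_mem_divisors hd)))

def consCofactor (hp : p.Prime) (x : Σ d : n.divisors, UnorderedFactorization d) :
    UnorderedFactorization (n * p) :=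
  ⟨(p * (n / x.1)) ::ₘ x.2.1,
    Multiset.forall_mem_cons.mpr ⟨two_le_prime_mul_div hp x.1.2, x.2.2.1⟩, by
      rw [Multiset.prod_cons, x.2.2.2, mul_assoc,
        Nat.div_mul_cancel (Nat.dvd_of_mem_divisors x.1.2), mul_comm]⟩

theorem filter_not_dvd_consCofactor (hp : p.Prime) (hpn : ¬ p ∣ n)
    (x : Σ d : n.divisors, UnorderedFactorization d) :
    (consCofactor hp x).1.filter (¬ p ∣ ·) = x.2.1 := by
  change ((p * (n / x.1)) ::ₘ x.2.1).filter (¬ p ∣ ·) = _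
  rw [Multiset.filter_cons_of_neg (p := fun a => ¬ p ∣ a) _ (not_not.mpr (dvd_mul_right _ _)),
    Multiset.filter_eq_self]
  intro a ha hpa
  exact hpn ((hpa.trans (x.2.2.2 ▸ Multiset.dvd_prod ha)).trans
    (Nat.dvd_of_mem_divisors x.1.2))

theorem consCofactor_injective (hp : p.Prime) (hpn : ¬ p ∣ n) :
    Function.Injective (consCofactor (n := n) hp) := by
  intro x y hxy
  have ht : x.2.1 = y.2.1 := by
    rw [← filter_not_dvd_consCofactor hp hpn x, ← filter_not_dvd_consCofactor hp hpn y, hxy]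
  refine Sigma.subtype_ext (Subtype.ext ?_) ht
  rw [← x.2.2.2, ← y.2.2.2, ht]

theorem consCofactor_surjective (hp : p.Prime) :
    Function.Surjective (consCofactor (n := n) hp) := by
  rintro ⟨s, hs, hsp⟩
  obtain ⟨_, has, e, rfl⟩ := hp.prime.exists_mem_multiset_dvd (hsp ▸ dvd_mul_left p n)
  set t := s.erase (p * e)
  have hst : s = (p * e) ::ₘ t := (Multiset.cons_erase has).symm
  have hen : e * t.prod = n := by
    apply Nat.eq_of_mul_eq_mul_left hp.pos
    rw [← mul_assoc, ← Multiset.prod_cons, ← hst, hsp, mul_comm]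
  have hn : n ≠ 0 := left_ne_zero_of_mul (Nat.zero_lt_of_lt (card_lt ⟨s, hs, hsp⟩)).ne'
  have hd : t.prod ∈ n.divisors := Nat.mem_divisors.mpr ⟨Dvd.intro_left e hen, hn⟩
  refine ⟨⟨⟨t.prod, hd⟩, ⟨t, fun y hy => hs y (Multiset.mem_of_mem_erase hy), rfl⟩⟩,
    Subtype.ext ?_⟩
  show (p * (n / t.prod)) ::ₘ t = s
  rw [hst, ← hen, Nat.mul_div_cancel _ (Nat.pos_of_mem_divisors hd)]

noncomputable def sigmaDivisorsEquivMulPrime (hp : p.Prime) (hpn : ¬ p ∣ n) :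
    (Σ d : n.divisors, UnorderedFactorization d) ≃ UnorderedFactorization (n * p) :=
  Equiv.ofBijective (consCofactor hp)
    ⟨consCofactor_injective hp hpn, consCofactor_surjective hp⟩

end UnorderedFactorization

theorem stmt12_general (n : ℕ) (p : ℕ) (hp : p.Prime) (hpn : ¬ p ∣ n) :
    numFactorizations (n * p) = ∑ d ∈ n.divisors, numFactorizations d := by
  rw [numFactorizations,
    ← Nat.card_congr (UnorderedFactorization.sigmaDivisorsEquivMulPrime hp hpn), Nat.card_sigma]
  exact Finset.sum_coe_sort n.divisors numFactorizations

/-- If `p` is a prime not dividing a positive natural number `n`,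
then `p*(n · p) = ∑_{d ∣ n} p*(d)`. -/
theorem stmt12 (n : ℕ) (hn : 0 < n) (p : ℕ) (hp : p.Prime) (hpn : ¬ p ∣ n) :
    numFactorizations (n * p) = ∑ d ∈ n.divisors, numFactorizations d :=
  stmt12_general n p hp hpn
end
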